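/- For all real numbers p > 0 and q > 0, ∫_0^1 (x^{p-1} - x^{q-1})/(1-x) dx = ψ(q) - ψ(p). -/

import Mathlib

/-!
Expanding `1 / (1 - x)` as a geometric series and integrating termwise turns the integral into
`∑ n, (1 / (p + n) - 1 / (q + n))`; for `p ≤ q` the terms are nonnegative, which justifies the
interchange. By `ψ (x + 1) = ψ x + 1 / x` the partial sums telescope to
`ψ q - ψ p - (ψ (q + N) - ψ (p + N))`, and the remainder tends to `0` because `ψ` is monotone
(`Γ` is log-convex) and `ψ (x + m) ≤ ψ x + m / x`.
-/

open MeasureTheory Real intervalIntegral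

/-- The digamma function `ψ(x) = Γ'(x)/Γ(x)`. -/
noncomputable def digamma (x : ℝ) : ℝ := deriv Real.Gamma x / Real.Gamma x

open Set Filter Topology

theorem ne_neg_natCast_of_pos {x : ℝ} (hx : 0 < x) (m : ℕ) : x ≠ -m :=
  ((neg_nonpos.2 m.cast_nonneg).trans_lt hx).ne'

theorem Real.deriv_Gamma_add_one {x : ℝ} (hx : ∀ m : ℕ, x ≠ -m) :
    deriv Gamma (x + 1) = Gamma x + x * deriv Gamma x := by
  have hx0 : x ≠ 0 := by simpa using hx 0
  have hfe : (fun y => Gamma (y + 1)) =ᶠ[𝓝 x] fun y => y * Gamma y := by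
    filter_upwards [isOpen_ne.mem_nhds hx0] with y hy using Gamma_add_one hy
  have hderiv : HasDerivAt (fun y => y * Gamma y) (1 * Gamma x + x * deriv Gamma x) x :=
    (hasDerivAt_id' x).mul (differentiableAt_Gamma hx).hasDerivAt
  rw [← deriv_comp_add_const, hfe.deriv_eq, hderiv.deriv, one_mul]

theorem digamma_add_one {x : ℝ} (hx : ∀ m : ℕ, x ≠ -m) :
    digamma (x + 1) = digamma x + x⁻¹ := by
  have hx0 : x ≠ 0 := by simpa using hx 0
  have hG := Gamma_ne_zero hx
  rw [digamma, digamma, deriv_Gamma_add_one hx, Gamma_add_one hx0]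
  field_simp
  ring

theorem digamma_add_nat {x : ℝ} (hx : 0 < x) (n : ℕ) :
    digamma (x + n) = digamma x + ∑ k ∈ Finset.range n, (x + k)⁻¹ := by
  induction n with
  | zero => simp
  | succ n ih =>
    rw [Nat.cast_succ, ← add_assoc, digamma_add_one (ne_neg_natCast_of_pos (by positivity)), ih,
      Finset.sum_range_succ, add_assoc]

theorem digamma_add_nat_le {x : ℝ} (hx : 0 < x) (n : ℕ) :
    digamma (x + n) ≤ digamma x + n / x := by
  have hsum : ∑ k ∈ Finset.range n, (x + k)⁻¹ ≤ ∑ _k ∈ Finset.range n, x⁻¹ :=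
    Finset.sum_le_sum fun k _ => inv_anti₀ hx (by simp)
  rw [digamma_add_nat hx n, div_eq_mul_inv]
  simpa using hsum

theorem hasDerivAt_log_Gamma {x : ℝ} (hx : ∀ m : ℕ, x ≠ -m) :
    HasDerivAt (log ∘ Gamma) (digamma x) x :=
  (differentiableAt_Gamma hx).hasDerivAt.log (Gamma_ne_zero hx)

theorem digamma_monotoneOn : MonotoneOn digamma (Ioi 0) := by
  have hderiv (x : ℝ) (hx : x ∈ Ioi 0) : HasDerivAt (log ∘ Gamma) (digamma x) x :=
    hasDerivAt_log_Gamma (ne_neg_natCast_of_pos hx)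
  refine (convexOn_log_Gamma.monotoneOn_deriv fun x hx => (hderiv x hx).differentiableAt).congr ?_
  exact fun x hx => (hderiv x hx).deriv

theorem tendsto_digamma_add_nat_sub_digamma_add_nat {p q : ℝ} (hp : 0 < p) (hpq : p ≤ q) :
    Tendsto (fun n : ℕ => digamma (q + n) - digamma (p + n)) atTop (𝓝 0) := by
  have hq := hp.trans_le hpq
  obtain ⟨m, hm⟩ := exists_nat_ge (q - p)
  refine squeeze_zero (g := fun n : ℕ => m / (p + n)) (fun n => ?_) (fun n => ?_) ?_
  · exact sub_nonneg.2 <|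
      digamma_monotoneOn (mem_Ioi.2 (by positivity)) (mem_Ioi.2 (by positivity)) (by linarith)
  · have hle := digamma_monotoneOn (a := q + n) (b := p + n + m) (mem_Ioi.2 (by positivity))
      (mem_Ioi.2 (by positivity)) (by linarith)
    linarith [digamma_add_nat_le (x := p + n) (by positivity) m]
  · exact tendsto_const_nhds.div_atTop
      (tendsto_atTop_add_const_left _ p tendsto_natCast_atTop_atTop)

theorem hasSum_inv_add_nat_sub_inv_add_nat {p q : ℝ} (hp : 0 < p) (hpq : p ≤ q) :
    HasSum (fun n : ℕ => (p + n)⁻¹ - (q + n)⁻¹) (digamma q - digamma p) := by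
  have hq := hp.trans_le hpq
  have hpartial (n : ℕ) : ∑ k ∈ Finset.range n, ((p + k)⁻¹ - (q + k)⁻¹)
      = digamma q - digamma p - (digamma (q + n) - digamma (p + n)) := by
    rw [Finset.sum_sub_distrib]
    linarith [digamma_add_nat hp n, digamma_add_nat hq n]
  rw [hasSum_iff_tendsto_nat_of_nonneg
    (fun n => sub_nonneg.2 <| inv_anti₀ (by positivity) (by linarith))]
  simpa [hpartial] using
    tendsto_const_nhds.sub (tendsto_digamma_add_nat_sub_digamma_add_nat hp hpq)

theorem integral_Ioo_zero_one_rpow {a : ℝ} (ha : -1 < a) :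
    ∫ x in Ioo (0 : ℝ) 1, x ^ a = (a + 1)⁻¹ := by
  rw [← integral_Ioc_eq_integral_Ioo, ← integral_of_le zero_le_one, integral_rpow (Or.inl ha),
    one_rpow, zero_rpow (by linarith), sub_zero, one_div]

theorem rpow_sub_rpow_mul_pow {x : ℝ} (hx : 0 < x) (a b : ℝ) (n : ℕ) :
    (x ^ a - x ^ b) * x ^ n = x ^ (a + n) - x ^ (b + n) := by
  rw [sub_mul, ← rpow_natCast, ← rpow_add hx, ← rpow_add hx]

theorem integrableOn_rpow_sub_rpow_mul_pow {p q : ℝ} (hp : 0 < p) (hq : 0 < q) (n : ℕ) :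
    IntegrableOn (fun x : ℝ => (x ^ (p - 1) - x ^ (q - 1)) * x ^ n) (Ioo 0 1) := by
  have hint (r : ℝ) (hr : 0 < r) : IntegrableOn (fun x : ℝ => x ^ (r - 1 + n)) (Ioo 0 1) :=
    (integrableOn_Ioo_rpow_iff one_pos).2 (by linarith [n.cast_nonneg (α := ℝ)])
  exact ((hint p hp).sub (hint q hq)).congr_fun
    (fun x hx => (rpow_sub_rpow_mul_pow hx.1 _ _ n).symm) measurableSet_Ioo

theorem integral_rpow_sub_rpow_mul_pow {p q : ℝ} (hp : 0 < p) (hq : 0 < q) (n : ℕ) :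
    ∫ x in Ioo (0 : ℝ) 1, (x ^ (p - 1) - x ^ (q - 1)) * x ^ n = (p + n)⁻¹ - (q + n)⁻¹ := by
  have hexp (r : ℝ) (hr : 0 < r) : -1 < r - 1 + n := by linarith [n.cast_nonneg (α := ℝ)]
  rw [setIntegral_congr_fun measurableSet_Ioo fun x hx => rpow_sub_rpow_mul_pow hx.1 _ _ n,
    integral_sub ((integrableOn_Ioo_rpow_iff one_pos).2 (hexp p hp))
      ((integrableOn_Ioo_rpow_iff one_pos).2 (hexp q hq)),
    integral_Ioo_zero_one_rpow (hexp p hp), integral_Ioo_zero_one_rpow (hexp q hq)]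
  ring_nf

theorem integral_Ioo_rpow_sub_rpow_div_one_sub_of_le {p q : ℝ} (hp : 0 < p) (hpq : p ≤ q) :
    ∫ x in Ioo (0 : ℝ) 1, (x ^ (p - 1) - x ^ (q - 1)) / (1 - x) = digamma q - digamma p := by
  have hq := hp.trans_le hpq
  have hsum := hasSum_inv_add_nat_sub_inv_add_nat hp hpq
  have hnorm (n : ℕ) : ∫ x in Ioo (0 : ℝ) 1, ‖(x ^ (p - 1) - x ^ (q - 1)) * x ^ n‖
      = (p + n)⁻¹ - (q + n)⁻¹ := by
    rw [← integral_rpow_sub_rpow_mul_pow hp hq n]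
    refine setIntegral_congr_fun measurableSet_Ioo fun x hx => norm_of_nonneg ?_
    exact mul_nonneg (sub_nonneg.2 <| rpow_le_rpow_of_exponent_ge hx.1 hx.2.le (by linarith))
      (pow_nonneg hx.1.le n)
  have hgeom : EqOn (fun x : ℝ => (x ^ (p - 1) - x ^ (q - 1)) / (1 - x))
      (fun x => ∑' n : ℕ, (x ^ (p - 1) - x ^ (q - 1)) * x ^ n) (Ioo 0 1) := fun x hx => by
    dsimp only
    rw [tsum_mul_left, tsum_geometric_of_lt_one hx.1.le hx.2, div_eq_mul_inv]
  have htermwise := hasSum_integral_of_summable_integral_norm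
    (integrableOn_rpow_sub_rpow_mul_pow hp hq) (by simpa only [hnorm] using hsum.summable)
  simp only [integral_rpow_sub_rpow_mul_pow hp hq] at htermwise
  rw [setIntegral_congr_fun measurableSet_Ioo hgeom]
  exact htermwise.unique hsum

theorem integral_rpow_sub_rpow_div_one_sub (p q : ℝ) (hp : 0 < p) (hq : 0 < q) :
    ∫ x in (0 : ℝ)..1, (x ^ (p - 1) - x ^ (q - 1)) / (1 - x) = digamma q - digamma p := by
  rw [integral_of_le zero_le_one, integral_Ioc_eq_integral_Ioo]
  rcases le_total p q with hpq | hqp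
  · exact integral_Ioo_rpow_sub_rpow_div_one_sub_of_le hp hpq
  · rw [← neg_sub (digamma p), ← integral_Ioo_rpow_sub_rpow_div_one_sub_of_le hq hqp,
      ← MeasureTheory.integral_neg]
    congr with x
    ring
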